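/- arXiv:1906.10523 — 2 statements merged into one kernel-verified Lean document; each statement's English description precedes it below -/
import Mathlib

section
/- Let G be an undirected graph, l ≥ 2, and v a vertex of G such that the minimum size of a v-hitting set equals 1. Then there exists a minimum-size l-path vertex cover S of G with v ∉ S. -/
/-
Take a minimum `l`-path vertex cover `S`. If `v ∈ S`, let `{x}` be a `v`-hitting set. Every
`l`-path avoiding `S - v` passes through `v` (otherwise it would avoid `S`), hence meets `x`;
so `{x} ∪ (S - v)` is again an `l`-path vertex cover, of size at most `|S|`, and it avoids `v`.
-/

variable {V : Type*} [Fintype V] [DecidableEq V]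

/-- `L` is the list of vertices of a path in `G` (consecutive vertices adjacent, no repeats). -/
def IsPathL (G : SimpleGraph V) (L : List V) : Prop :=
  L.Chain' G.Adj ∧ L.Nodup

/-- `L` is an `l`-path in `G`: a path on exactly `l` vertices. -/
def IsLPathL (G : SimpleGraph V) (l : ℕ) (L : List V) : Prop :=
  IsPathL G L ∧ L.length = l

/-- `L` is a `v`-path: an `l`-path containing the vertex `v`. -/
def IsVPathL (G : SimpleGraph V) (l : ℕ) (v : V) (L : List V) : Prop :=
  IsLPathL G l L ∧ v ∈ L

/-- `S` is an `l`-path vertex cover of `G`: `G - S` contains no `l`-path. -/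
def IsLPVC (G : SimpleGraph V) (l : ℕ) (S : Finset V) : Prop :=
  ¬ ∃ L, IsLPathL G l L ∧ ∀ x ∈ L, x ∉ S

/-- `X` is a `v`-hitting set: a set of vertices of the connected component of `v`,
not containing `v`, intersecting every `v`-path. -/
def IsVHit (G : SimpleGraph V) (l : ℕ) (v : V) (X : Finset V) : Prop :=
  v ∉ X ∧ (∀ x ∈ X, G.Reachable v x) ∧
    ∀ L, IsVPathL G l v L → ∃ x ∈ X, x ∈ L

/-- `u` is reachable from `w` by a walk avoiding the set `S`
(i.e. `u` is in the connected component of `w` in `G - S`). -/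
def ReachAvoid (G : SimpleGraph V) (S : Set V) (w u : V) : Prop :=
  ∃ q : G.Walk w u, ∀ x ∈ q.support, x ∉ S

/-- Two `v`-paths are intersecting if they have different vertex sets and share
a vertex other than `v`. -/
def IntersectingVP (v : V) (L L' : List V) : Prop :=
  L.toFinset ≠ L'.toFinset ∧ ∃ u, u ≠ v ∧ u ∈ L ∧ u ∈ L'

omit [DecidableEq V] in
theorem isLPVC_univ (G : SimpleGraph V) {l : ℕ} (hl : l ≠ 0) : IsLPVC G l Finset.univ := by
  rintro ⟨L, ⟨-, hlen⟩, hL⟩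
  obtain ⟨a, ha⟩ := List.exists_mem_of_ne_nil L (by rintro rfl; exact hl hlen.symm)
  exact hL a ha (Finset.mem_univ a)

omit [DecidableEq V] in
theorem exists_isLPVC_forall_card_le (G : SimpleGraph V) {l : ℕ} (hl : l ≠ 0) :
    ∃ S : Finset V, IsLPVC G l S ∧ ∀ T : Finset V, IsLPVC G l T → S.card ≤ T.card := by
  classical
  obtain ⟨S, hS, hmin⟩ := Finset.exists_min_image (Finset.univ.filter (IsLPVC G l))
    Finset.card ⟨Finset.univ, Finset.mem_filter.2 ⟨Finset.mem_univ _, isLPVC_univ G hl⟩⟩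
  exact ⟨S, (Finset.mem_filter.1 hS).2,
    fun T hT => hmin T (Finset.mem_filter.2 ⟨Finset.mem_univ _, hT⟩)⟩

omit [Fintype V] in
theorem IsLPVC.union_erase {G : SimpleGraph V} {l : ℕ} {v : V} {S X : Finset V}
    (hS : IsLPVC G l S) (hX : ∀ L, IsVPathL G l v L → ∃ x ∈ X, x ∈ L) :
    IsLPVC G l (X ∪ S.erase v) := by
  rintro ⟨L, hL, havoid⟩
  by_cases hvL : v ∈ L
  · obtain ⟨x, hxX, hxL⟩ := hX L ⟨hL, hvL⟩
    exact havoid x hxL (Finset.mem_union_left _ hxX)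
  · refine hS ⟨L, hL, fun y hy hyS => havoid y hy (Finset.mem_union_right _ ?_)⟩
    exact Finset.mem_erase.2 ⟨fun h => hvL (h ▸ hy), hyS⟩

theorem stmt_1_general (G : SimpleGraph V) (l : ℕ) (v : V)
    (hl : 2 ≤ l)
    (hβ1 : ∃ X : Finset V, IsVHit G l v X ∧ X.card = 1) :
    ∃ S : Finset V, IsLPVC G l S ∧ (∀ T : Finset V, IsLPVC G l T → S.card ≤ T.card) ∧
      v ∉ S := by
  obtain ⟨X, ⟨hvX, -, hXhit⟩, hXcard⟩ := hβ1
  obtain ⟨S, hS, hSmin⟩ := exists_isLPVC_forall_card_le G (l := l) (by omega)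
  by_cases hvS : v ∈ S
  · refine ⟨X ∪ S.erase v, hS.union_erase hXhit, fun T hT => ?_, by simp [hvX]⟩
    calc (X ∪ S.erase v).card ≤ X.card + (S.erase v).card := Finset.card_union_le _ _
      _ = S.card := by
        rw [hXcard, Finset.card_erase_of_mem hvS]
        have := Finset.card_pos.2 ⟨v, hvS⟩
        omega
      _ ≤ T.card := hSmin T hT
  · exact ⟨S, hS, hSmin, hvS⟩

theorem stmt_1 (G : SimpleGraph V) (l : ℕ) (v : V)
    (hl : 2 ≤ l)
    (hβ1 : ∃ X : Finset V, IsVHit G l v X ∧ X.card = 1)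
    (hβ0 : ¬ IsVHit G l v (∅ : Finset V)) :
    ∃ S : Finset V, IsLPVC G l S ∧ (∀ T : Finset V, IsLPVC G l T → S.card ≤ T.card) ∧
      v ∉ S :=
  stmt_1_general G l v hl hβ1
end

section
/- Let G be a connected graph containing an l-path, v a vertex of G, and C a connected component of G − v containing an l-path y_1,…,y_l. Then G contains a path of at least ⌈l/2⌉ + 1 vertices starting at v whose other vertices all lie in C. Consequently, if two distinct components C_0, C'_0 of G − v each contain an l-path, then G contains a v-path (an l-path through v) all of whose vertices other than v lie in C_0 ∪ C'_0. -/
variable {V : Type*} [Fintype V] [DecidableEq V]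

/-!
Join `v` to an `l`-path `Y` of its component `C` of `G - v` by a path meeting `Y` only in its
last vertex `u`. Of the two pieces of `Y` on either side of `u`, one has at least `⌈l/2⌉`
vertices including `u`; following it yields a path from `v` of at least `⌈l/2⌉ + 1` vertices whose
other vertices lie in `C`. Two such paths into different components meet only in `v`, so together
they form a path of at least `2⌈l/2⌉ + 1 > l` vertices with `v` in the middle, and a window of `l`
consecutive vertices around `v` is the required `v`-path.
-/

section

omit [Fintype V] [DecidableEq V]

theorem List.exists_infix_length_eq_of_mem {α : Type*} {L : List α} {a : α} {n : ℕ}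
    (ha : a ∈ L) (hn : 0 < n) (hnL : n ≤ L.length) :
    ∃ N, N <:+: L ∧ N.length = n ∧ a ∈ N := by
  obtain ⟨A, B, rfl⟩ := List.append_of_mem ha
  simp only [List.length_append, List.length_cons] at hnL
  set s := A.length + 1 - n
  refine ⟨((A ++ a :: B).drop s).take n,
    (List.take_prefix _ _).isInfix.trans (List.drop_suffix _ _).isInfix,
    by simp only [List.length_take, List.length_drop, List.length_append, List.length_cons]; omega,
    List.mem_of_getElem? (i := A.length - s) ?_⟩
  rw [List.getElem?_take, if_pos (by omega), List.getElem?_drop,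
    show s + (A.length - s) = A.length by omega]
  simp

namespace ReachAvoid

variable {G : SimpleGraph V} {S : Set V} {x y z : V}

theorem refl (hx : x ∉ S) : ReachAvoid G S x x :=
  ⟨.nil, by simpa using hx⟩

theorem symm (h : ReachAvoid G S x y) : ReachAvoid G S y x := by
  obtain ⟨q, hq⟩ := h
  exact ⟨q.reverse, fun a ha => hq a (by simpa using ha)⟩

theorem trans (h₁ : ReachAvoid G S x y) (h₂ : ReachAvoid G S y z) : ReachAvoid G S x z := by
  obtain ⟨q, hq⟩ := h₁
  obtain ⟨r, hr⟩ := h₂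
  refine ⟨q.append r, fun a ha => ?_⟩
  rcases List.mem_append.mp (SimpleGraph.Walk.support_append q r ▸ ha) with ha | ha
  · exact hq a ha
  · exact hr a (List.mem_of_mem_tail ha)

theorem notMem_right (h : ReachAvoid G S x y) : y ∉ S := by
  obtain ⟨q, hq⟩ := h
  exact hq y q.end_mem_support

end ReachAvoid

theorem SimpleGraph.Adj.reachAvoid {G : SimpleGraph V} {S : Set V} {x y : V} (h : G.Adj x y)
    (hx : x ∉ S) (hy : y ∉ S) : ReachAvoid G S x y :=
  ⟨h.toWalk, by simp [hx, hy]⟩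

theorem reachAvoid_of_isChain {G : SimpleGraph V} {S : Set V} {L : List V} {x y : V}
    (hL : L.IsChain G.Adj) (hS : ∀ z ∈ L, z ∉ S) (hx : x ∈ L) (hy : y ∈ L) :
    ReachAvoid G S x y := by
  have hhead : ∀ z ∈ L, ReachAvoid G S (L.head (List.ne_nil_of_mem hx)) z :=
    (List.IsChain.iff_mem.mp hL).induction _ L
      (fun a b ⟨ha, hb, hab⟩ h => h.trans (hab.reachAvoid (hS a ha) (hS b hb)))
      (fun _ => .refl (hS _ (List.head_mem _)))
  exact (hhead x hx).symm.trans (hhead y hy)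

namespace IsPathL

variable {G : SimpleGraph V} {L L₁ L₂ : List V} {u : V}

theorem _root_.IsPathL.infix (h : IsPathL G L) (h' : L₁ <:+: L) : IsPathL G L₁ :=
  ⟨h.1.infix h', h.2.sublist h'.sublist⟩

theorem reverse (h : IsPathL G L) : IsPathL G L.reverse :=
  ⟨List.isChain_reverse.mpr (h.1.imp fun _ _ hab => hab.symm), List.nodup_reverse.mpr h.2⟩

theorem of_cons (h : IsPathL G (u :: L)) : IsPathL G L :=
  ⟨h.1.tail, (List.nodup_cons.mp h.2).2⟩

theorem append_cons (h₁ : IsPathL G (L₁ ++ [u])) (h₂ : IsPathL G (u :: L₂))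
    (hdisj : L₁.Disjoint (u :: L₂)) : IsPathL G (L₁ ++ u :: L₂) :=
  ⟨by
    have := h₁.1.append_overlap (l₃ := L₂) h₂.1 (List.cons_ne_nil _ _)
    simp only [List.append_assoc, List.singleton_append] at this
    exact this,
    List.nodup_append'.mpr ⟨(List.nodup_append'.mp h₁.2).1, h₂.2, hdisj⟩⟩

theorem exists_half_from_mem (h : IsPathL G L) (hu : u ∈ L) :
    ∃ T, IsPathL G (u :: T) ∧ u :: T ⊆ L ∧ L.length ≤ 2 * T.length + 1 := by
  obtain ⟨L₁, L₂, rfl⟩ := List.append_of_mem hu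
  rcases le_total L₁.length L₂.length with hlen | hlen
  · have hsuffix : u :: L₂ <:+ L₁ ++ u :: L₂ := List.suffix_append _ _
    exact ⟨L₂, h.infix hsuffix.isInfix, hsuffix.subset, by simp; omega⟩
  · have hprefix : L₁ ++ [u] <+: L₁ ++ u :: L₂ := ⟨L₂, by simp⟩
    refine ⟨L₁.reverse, by simpa using (h.infix hprefix.isInfix).reverse, ?_, by simp; omega⟩
    simp

end IsPathL

theorem SimpleGraph.Walk.IsPath.isPathL {G : SimpleGraph V} {u v : V} {p : G.Walk u v}
    (hp : p.IsPath) : IsPathL G p.support :=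
  ⟨p.isChain_adj_support, hp.support_nodup⟩

theorem exists_path_to_first_mem [DecidableEq V] {G : SimpleGraph V} {Y : List V} {v y : V}
    (hvy : G.Reachable v y) (hy : y ∈ Y) (hv : v ∉ Y) :
    ∃ P u, IsPathL G (v :: P ++ [u]) ∧ u ∈ Y ∧ ∀ x ∈ P, x ∉ Y := by
  obtain ⟨q⟩ := hvy
  obtain ⟨p, hp⟩ := q.toPath
  have hy' : y ∈ p.support.tail :=
    p.end_mem_tail_support_of_ne (by rintro rfl; exact hv hy)
  obtain ⟨u, hu⟩ := Option.isSome_iff_exists.mp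
    (List.find?_isSome.mpr ⟨y, hy', decide_eq_true hy⟩ :
      (p.support.tail.find? (· ∈ Y)).isSome)
  obtain ⟨huY, P, R, hsplit, hP⟩ := List.find?_eq_some_iff_append.mp hu
  have hprefix : v :: P ++ [u] <+: p.support :=
    ⟨R, by rw [← p.cons_tail_support, hsplit]; simp⟩
  exact ⟨P, u, hp.isPathL.infix hprefix.isInfix, by simpa using huY,
    fun x hx => by simpa using hP x hx⟩

theorem exists_path_into_component [DecidableEq V] {G : SimpleGraph V} {Y : List V} {v w y : V}
    (hY : IsPathL G Y) (hYC : ∀ x ∈ Y, ReachAvoid G {v} w x) (hy : y ∈ Y)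
    (hvy : G.Reachable v y) :
    ∃ R, IsPathL G (v :: R) ∧ Y.length < 2 * R.length ∧ ∀ x ∈ R, ReachAvoid G {v} w x := by
  have hvY : v ∉ Y := fun hv => (hYC v hv).notMem_right rfl
  obtain ⟨P, u, hPu, huY, hPY⟩ := exists_path_to_first_mem hvy hy hvY
  obtain ⟨T, hT, hTY, hlen⟩ := hY.exists_half_from_mem huY
  have hpath : IsPathL G (v :: P ++ u :: T) := by
    refine hPu.append_cons hT fun x hx hxT => ?_
    rcases List.mem_cons.mp hx with rfl | hx
    · exact hvY (hTY hxT)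
    · exact hPY x hx (hTY hxT)
  have hvR : ∀ z ∈ P ++ u :: T, z ∉ ({v} : Set V) := fun z hz hzv =>
    (List.nodup_cons.mp hpath.2).1 (Set.mem_singleton_iff.mp hzv ▸ hz)
  refine ⟨P ++ u :: T, hpath, by simp; omega, fun x hx => ?_⟩
  exact (hYC u huY).trans (reachAvoid_of_isChain hpath.of_cons.1 hvR (by simp) hx)

theorem exists_vPath_of_disjoint {G : SimpleGraph V} {R R' : List V} {v : V} {l : ℕ}
    (hR : IsPathL G (v :: R)) (hR' : IsPathL G (v :: R')) (hdisj : R.Disjoint R')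
    (hl : 0 < l) (hlen : l ≤ R.length + R'.length + 1) :
    ∃ M, IsVPathL G l v M ∧ M ⊆ R.reverse ++ v :: R' := by
  have hP : IsPathL G (R.reverse ++ v :: R') := by
    refine (by simpa using hR.reverse : IsPathL G (R.reverse ++ [v])).append_cons hR'
      fun x hx hx' => ?_
    rw [List.mem_reverse] at hx
    rcases List.mem_cons.mp hx' with rfl | hx'
    · exact (List.nodup_cons.mp hR.2).1 hx
    · exact hdisj hx hx'
  obtain ⟨M, hM, hMl, hvM⟩ := List.exists_infix_length_eq_of_mem
    (by simp : v ∈ R.reverse ++ v :: R') hl (by simp; omega)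
  exact ⟨M, ⟨⟨hP.infix hM, hMl⟩, hvM⟩, hM.subset⟩

end

theorem stmt_8_general (G : SimpleGraph V) (l : ℕ) (v : V)
    (hl : 2 ≤ l) (hconn : G.Connected) :
    (∀ w : V, w ≠ v →
      (∃ Y : List V, IsLPathL G l Y ∧ ∀ x ∈ Y, ReachAvoid G {v} w x) →
      ∃ M : List V, IsPathL G M ∧ M.head? = some v ∧ (l + 1) / 2 + 1 ≤ M.length ∧
        ∀ x ∈ M.tail, ReachAvoid G {v} w x) ∧
    (∀ w w' : V, w ≠ v → w' ≠ v →
      (∃ Y : List V, IsLPathL G l Y ∧ ∀ x ∈ Y, ReachAvoid G {v} w x) →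
      (∃ Y : List V, IsLPathL G l Y ∧ ∀ x ∈ Y, ReachAvoid G {v} w' x) →
      ¬ ReachAvoid G {v} w w' →
      ∃ M : List V, IsVPathL G l v M ∧
        ∀ x ∈ M, x ≠ v → (ReachAvoid G {v} w x ∨ ReachAvoid G {v} w' x)) := by
  have hlong : ∀ w, (∃ Y, IsLPathL G l Y ∧ ∀ x ∈ Y, ReachAvoid G {v} w x) →
      ∃ R, IsPathL G (v :: R) ∧ l < 2 * R.length ∧ ∀ x ∈ R, ReachAvoid G {v} w x := by
    rintro w ⟨Y, ⟨hY, rfl⟩, hYC⟩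
    obtain ⟨y, hy⟩ := List.exists_mem_of_length_pos (by omega : 0 < Y.length)
    exact exists_path_into_component hY hYC hy (hconn.preconnected v y)
  refine ⟨fun w _ hC => ?_, fun w w' _ _ hC hC' hsep => ?_⟩
  · obtain ⟨R, hR, hlen, hRC⟩ := hlong w hC
    exact ⟨v :: R, hR, rfl, by simp; omega, hRC⟩
  · obtain ⟨R, hR, hlen, hRC⟩ := hlong w hC
    obtain ⟨R', hR', hlen', hRC'⟩ := hlong w' hC'
    have hdisj : R.Disjoint R' := fun x hx hx' => hsep ((hRC x hx).trans (hRC' x hx').symm)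
    obtain ⟨M, hM, hMsub⟩ := exists_vPath_of_disjoint (l := l) hR hR' hdisj (by omega) (by omega)
    refine ⟨M, hM, fun x hx hxv => ?_⟩
    rcases List.mem_append.mp (hMsub hx) with hxR | hxR'
    · exact .inl (hRC x (List.mem_reverse.mp hxR))
    · exact .inr (hRC' x ((List.mem_cons.mp hxR').resolve_left hxv))

theorem stmt_8 (G : SimpleGraph V) (l : ℕ) (v : V)
    (hl : 2 ≤ l) (hconn : G.Connected)
    (hG : ∃ L : List V, IsLPathL G l L) :
    (∀ w : V, w ≠ v →
      (∃ Y : List V, IsLPathL G l Y ∧ ∀ x ∈ Y, ReachAvoid G {v} w x) →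
      ∃ M : List V, IsPathL G M ∧ M.head? = some v ∧ (l + 1) / 2 + 1 ≤ M.length ∧
        ∀ x ∈ M.tail, ReachAvoid G {v} w x) ∧
    (∀ w w' : V, w ≠ v → w' ≠ v →
      (∃ Y : List V, IsLPathL G l Y ∧ ∀ x ∈ Y, ReachAvoid G {v} w x) →
      (∃ Y : List V, IsLPathL G l Y ∧ ∀ x ∈ Y, ReachAvoid G {v} w' x) →
      ¬ ReachAvoid G {v} w w' →
      ∃ M : List V, IsVPathL G l v M ∧
        ∀ x ∈ M, x ≠ v → (ReachAvoid G {v} w x ∨ ReachAvoid G {v} w' x)) :=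
  stmt_8_general G l v hl hconn
end
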